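/- The matrix A₁·A₃⁻¹ is a regular elliptic element of order 4: (A₁·A₃⁻¹)⁴ = 1 and the characteristic polynomial of A₁·A₃⁻¹ has three pairwise distinct complex roots. -/

import Mathlib

/-!
The characteristic polynomial of `A₁ * A₃⁻¹` is `X³ - X² + X - 1 = (X - 1)(X - i)(X + i)`, which
divides `X⁴ - 1`, so `(A₁ * A₃⁻¹)⁴ = 1` follows from Cayley–Hamilton.
-/

noncomputable section

open Matrix Polynomial

/-- ω = i·√7 -/
def ω : ℂ := Complex.I * Real.sqrt 7

def A₁ : Matrix (Fin 3) (Fin 3) ℂ := !![1, 1, -1/2; 0, 1, -1; 0, 0, 1]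

def A₃ : Matrix (Fin 3) (Fin 3) ℂ := !![1, 0, 0; (5-ω)/4, 1, 0; -1, (-5-ω)/4, 1]

theorem Matrix.charpoly_fin_three {R : Type*} [CommRing R] (M : Matrix (Fin 3) (Fin 3) R) :
    M.charpoly = X ^ 3 - C M.trace * X ^ 2 + C M.adjugate.trace * X - C M.det := by
  rw [charpoly, det_fin_three, det_fin_three, trace_fin_three, trace_fin_three, adjugate_fin_three]
  simp only [charmatrix_apply, diagonal_apply, Fin.reduceEq, if_true, if_false, of_apply,
    cons_val', cons_val_zero, cons_val_one, cons_val_two, tail_cons, empty_val',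
    cons_val_fin_one, vecHead, map_add, map_sub, map_mul]
  ring

theorem Matrix.pow_eq_one_of_charpoly_dvd {n R : Type*} [Fintype n] [DecidableEq n] [CommRing R]
    {M : Matrix n n R} {k : ℕ} (h : M.charpoly ∣ X ^ k - 1) : M ^ k = 1 := by
  simpa [sub_eq_zero] using aeval_eq_zero_of_dvd_aeval_eq_zero h M.aeval_self_charpoly

lemma ω_sq : ω ^ 2 = -7 := by
  rw [ω, mul_pow, Complex.I_sq, ← Complex.ofReal_pow, Real.sq_sqrt (by norm_num)]
  norm_num

lemma A₃_inv : A₃⁻¹ = !![1, 0, 0; (ω-5)/4, 1, 0; -1, (5+ω)/4, 1] := by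
  refine inv_eq_left_inv ?_
  ext i j
  fin_cases i <;> fin_cases j <;>
    simp [A₃, mul_apply, Fin.sum_univ_three, one_apply] <;> grind [ω_sq]

lemma A₁_mul_A₃_inv : A₁ * A₃⁻¹ =
    !![(1+ω)/4, (3-ω)/8, -1/2; (ω-1)/4, (-1-ω)/4, -1; -1, (5+ω)/4, 1] := by
  rw [A₃_inv]
  ext i j
  fin_cases i <;> fin_cases j <;>
    simp [A₁, mul_apply, Fin.sum_univ_three] <;> ring

lemma charpoly_A₁_mul_A₃_inv : (A₁ * A₃⁻¹).charpoly = X ^ 3 - X ^ 2 + X - 1 := by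
  have htrace : (A₁ * A₃⁻¹).trace = 1 := by
    rw [A₁_mul_A₃_inv, trace_fin_three]; simp; ring
  have hadj : (A₁ * A₃⁻¹).adjugate.trace = 1 := by
    rw [A₁_mul_A₃_inv, adjugate_fin_three, trace_fin_three]; simp; grind [ω_sq]
  have hdet : (A₁ * A₃⁻¹).det = 1 := by
    rw [A₁_mul_A₃_inv, det_fin_three]; simp; grind [ω_sq]
  rw [charpoly_fin_three, htrace, hadj, hdet, map_one, one_mul, one_mul]

lemma X_cube_sub_X_sq_add_X_sub_one_eq :
    (X ^ 3 - X ^ 2 + X - 1 : ℂ[X]) = (X - C 1) * (X - C Complex.I) * (X - C (-Complex.I)) := by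
  have hI : C Complex.I ^ 2 = -1 := by rw [← C_pow, Complex.I_sq, C_neg, C_1]
  rw [map_neg, map_one]
  linear_combination (X - 1) * hI

theorem stmt11 :
    (A₁ * A₃⁻¹) ^ 4 = 1 ∧
    ∃ a b c : ℂ, a ≠ b ∧ b ≠ c ∧ a ≠ c ∧
      (A₁ * A₃⁻¹).charpoly = (X - C a) * (X - C b) * (X - C c) := by
  constructor
  · exact pow_eq_one_of_charpoly_dvd ⟨X + 1, by rw [charpoly_A₁_mul_A₃_inv]; ring⟩
  · refine ⟨1, Complex.I, -Complex.I, ?_, ?_, ?_, ?_⟩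
    · norm_num [Complex.ext_iff]
    · norm_num [Complex.ext_iff]
    · norm_num [Complex.ext_iff]
    · rw [charpoly_A₁_mul_A₃_inv, X_cube_sub_X_sq_add_X_sub_one_eq]
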